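/- arXiv:1009.5755 — 2 statements merged into one kernel-verified Lean document; each statement's English description precedes it below -/
import Mathlib

section
/- Let ψ₁(m, α₁, α₂, α₃, α₄) = (2α₁−α₂−α₃−α₄)(m³−3α₁²m) − (2α₁²−α₂²−α₃²−α₄²)(3m²−3α₁m) + (2α₁³−α₂³−α₃³−α₄³)(3m−α₁−α₂−α₃−α₄). Then the point (m,α₁,α₂,α₃,α₄) = (1,1,0,0,0) is a zero of ψ₁ of multiplicity three, i.e. ψ₁ and all its first and second partial derivatives vanish at (1,1,0,0,0), while some third partial derivative is nonzero there. -/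
open MvPolynomial

/-- The quartic `ψ₁` in variables `m = X 0`, `α₁ = X 1`, …, `α₄ = X 4`. -/
noncomputable def psi1 : MvPolynomial (Fin 5) ℚ :=
  (2 * X 1 - X 2 - X 3 - X 4) * ((X 0) ^ 3 - 3 * (X 1) ^ 2 * X 0)
    - (2 * (X 1) ^ 2 - (X 2) ^ 2 - (X 3) ^ 2 - (X 4) ^ 2)
        * (3 * (X 0) ^ 2 - 3 * X 1 * X 0)
    + (2 * (X 1) ^ 3 - (X 2) ^ 3 - (X 3) ^ 3 - (X 4) ^ 3)
        * (3 * X 0 - X 1 - X 2 - X 3 - X 4)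

lemma pd2 (i : Fin 5) : pderiv i (2 : MvPolynomial (Fin 5) ℚ) = 0 := by
  rw [show (2 : MvPolynomial (Fin 5) ℚ) = ((2 : ℕ) : MvPolynomial (Fin 5) ℚ) by norm_num]
  exact (pderiv i).map_natCast _

lemma pd3 (i : Fin 5) : pderiv i (3 : MvPolynomial (Fin 5) ℚ) = 0 := by
  rw [show (3 : MvPolynomial (Fin 5) ℚ) = ((3 : ℕ) : MvPolynomial (Fin 5) ℚ) by norm_num]
  exact (pderiv i).map_natCast _

set_option maxHeartbeats 2000000 in
/-- The point `(m, α₁, α₂, α₃, α₄) = (1,1,0,0,0)` is a zero of `ψ₁` of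
multiplicity three: `ψ₁` and all its first and second partial derivatives
vanish there, while some third partial derivative does not. -/
theorem psi1_triple_point :
    eval (![1, 1, 0, 0, 0] : Fin 5 → ℚ) psi1 = 0 ∧
      (∀ i : Fin 5, eval (![1, 1, 0, 0, 0] : Fin 5 → ℚ) (pderiv i psi1) = 0) ∧
      (∀ i j : Fin 5,
        eval (![1, 1, 0, 0, 0] : Fin 5 → ℚ) (pderiv j (pderiv i psi1)) = 0) ∧
      (∃ i j k : Fin 5,
        eval (![1, 1, 0, 0, 0] : Fin 5 → ℚ) (pderiv k (pderiv j (pderiv i psi1))) ≠ 0) := by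
  refine ⟨?_, ?_, ?_, ⟨0, 0, 0, ?_⟩⟩
  · simp [psi1]; norm_num
  · intro i; fin_cases i <;>
      · simp [psi1, pderiv_X, Pi.single_apply, pd2, pd3]; try norm_num
  · intro i j; fin_cases i <;> fin_cases j <;>
      · simp [psi1, pderiv_X, Pi.single_apply, pd2, pd3]; try norm_num
  · simp [psi1, pderiv_X, Pi.single_apply, pd2, pd3]
end

section
/- In ℚ[m, α₁, α₂, α₃], under the constraints m > 0, α_i > 0 and m + α_j > α₁+α₂+α₃ for all j ∈ {1,2,3}, the system {(α₁−α₂)(m−α₁−α₂−α₃)(m²−2α₁m−2α₂m+α₃m+α₁²+α₁α₂+α₂²) = 0, (α₂−α₃)(m−α₁−α₂−α₃)(m²−2α₃m−2α₂m+α₁m+α₃²+α₃α₂+α₂²) = 0} holds if and only if the system {(α₁−α₂)(m−α₁−α₂−α₃)(m−α₁−α₂+α₃) = 0, (α₂−α₃)(m−α₁−α₂−α₃)(m+α₁−α₂−α₃) = 0} holds, and both are equivalent to (α₁ = α₂ = α₃) ∨ (α₁+α₂+α₃ = m). -/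
/-- Under the ampleness constraints `m > 0`, `αᵢ > 0`, `m + α_j > α₁+α₂+α₃`,
the system of cubic equations coming from `F₁ = 0` is equivalent to the system
of factored linear equations coming from `F₂ = 0`, and both are equivalent to
`α₁ = α₂ = α₃` or `α₁ + α₂ + α₃ = m`. -/
theorem blowup_three_points_systems_equiv (m a1 a2 a3 : ℝ)
    (hm : 0 < m) (h1 : 0 < a1) (h2 : 0 < a2) (h3 : 0 < a3)
    (hn1 : a1 + a2 + a3 < m + a1) (hn2 : a1 + a2 + a3 < m + a2)
    (hn3 : a1 + a2 + a3 < m + a3) :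
    (((a1 - a2) * (m - a1 - a2 - a3)
          * (m ^ 2 - 2 * a1 * m - 2 * a2 * m + a3 * m
              + a1 ^ 2 + a1 * a2 + a2 ^ 2) = 0 ∧
        (a2 - a3) * (m - a1 - a2 - a3)
          * (m ^ 2 - 2 * a3 * m - 2 * a2 * m + a1 * m
              + a3 ^ 2 + a3 * a2 + a2 ^ 2) = 0) ↔
      ((a1 - a2) * (m - a1 - a2 - a3) * (m - a1 - a2 + a3) = 0 ∧
        (a2 - a3) * (m - a1 - a2 - a3) * (m + a1 - a2 - a3) = 0)) ∧
    (((a1 - a2) * (m - a1 - a2 - a3)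
          * (m ^ 2 - 2 * a1 * m - 2 * a2 * m + a3 * m
              + a1 ^ 2 + a1 * a2 + a2 ^ 2) = 0 ∧
        (a2 - a3) * (m - a1 - a2 - a3)
          * (m ^ 2 - 2 * a3 * m - 2 * a2 * m + a1 * m
              + a3 ^ 2 + a3 * a2 + a2 ^ 2) = 0) ↔
      ((a1 = a2 ∧ a2 = a3) ∨ a1 + a2 + a3 = m)) := by
  have hs3 : a1 + a2 < m := by linarith
  have hs1 : a2 + a3 < m := by linarith
  have hs2 : a1 + a3 < m := by linarith
  have key : ((a1 - a2) * (m - a1 - a2 - a3)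
          * (m ^ 2 - 2 * a1 * m - 2 * a2 * m + a3 * m
              + a1 ^ 2 + a1 * a2 + a2 ^ 2) = 0 ∧
        (a2 - a3) * (m - a1 - a2 - a3)
          * (m ^ 2 - 2 * a3 * m - 2 * a2 * m + a1 * m
              + a3 ^ 2 + a3 * a2 + a2 ^ 2) = 0) ↔
      ((a1 = a2 ∧ a2 = a3) ∨ a1 + a2 + a3 = m) := by
    constructor
    · rintro ⟨e1, e2⟩
      by_cases hsum : a1 + a2 + a3 = m
      · exact Or.inr hsum
      left
      have hmid : m - a1 - a2 - a3 ≠ 0 := fun h => hsum (by linarith)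
      have e1' : a1 - a2 = 0 ∨
          m ^ 2 - 2 * a1 * m - 2 * a2 * m + a3 * m + a1 ^ 2 + a1 * a2 + a2 ^ 2 = 0 := by
        rcases mul_eq_zero.mp e1 with h | h
        · rcases mul_eq_zero.mp h with h' | h'
          · exact Or.inl h'
          · exact absurd h' hmid
        · exact Or.inr h
      have e2' : a2 - a3 = 0 ∨
          m ^ 2 - 2 * a3 * m - 2 * a2 * m + a1 * m + a3 ^ 2 + a3 * a2 + a2 ^ 2 = 0 := by
        rcases mul_eq_zero.mp e2 with h | h
        · rcases mul_eq_zero.mp h with h' | h'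
          · exact Or.inl h'
          · exact absurd h' hmid
        · exact Or.inr h
      rcases e1' with h12 | hQ1 <;> rcases e2' with h23 | hQ2
      · exact ⟨by linarith, by linarith⟩
      · exfalso
        nlinarith [sq_nonneg (2*m - 2*a3 - a2), sq_nonneg a2]
      · exfalso
        nlinarith [sq_nonneg (2*m - 2*a1 - a2), sq_nonneg a2]
      · exfalso
        have h13 : (a1 - a3) * (a1 + a2 + a3 - 3*m) = 0 := by linear_combination hQ1 - hQ2
        have h13' : a1 = a3 := by
          rcases mul_eq_zero.mp h13 with h | h
          · linarith
          · linarith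
        nlinarith [sq_nonneg (2*m - 2*a2 - a1), sq_nonneg a1]
    · rintro (⟨ha, hb⟩ | hsum)
      · constructor
        · rw [show a1 - a2 = 0 by linarith]; ring
        · rw [show a2 - a3 = 0 by linarith]; ring
      · constructor
        · rw [show m - a1 - a2 - a3 = 0 by linarith]; ring
        · rw [show m - a1 - a2 - a3 = 0 by linarith]; ring
  have key2 : ((a1 - a2) * (m - a1 - a2 - a3) * (m - a1 - a2 + a3) = 0 ∧
        (a2 - a3) * (m - a1 - a2 - a3) * (m + a1 - a2 - a3) = 0) ↔
      ((a1 = a2 ∧ a2 = a3) ∨ a1 + a2 + a3 = m) := by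
    have hl1 : m - a1 - a2 + a3 ≠ 0 := by intro h; linarith
    have hl2 : m + a1 - a2 - a3 ≠ 0 := by intro h; linarith
    constructor
    · rintro ⟨e1, e2⟩
      by_cases hsum : a1 + a2 + a3 = m
      · exact Or.inr hsum
      left
      have hmid : m - a1 - a2 - a3 ≠ 0 := fun h => hsum (by linarith)
      have e1' : a1 - a2 = 0 := by
        rcases mul_eq_zero.mp e1 with h | h
        · rcases mul_eq_zero.mp h with h' | h'
          · exact h'
          · exact absurd h' hmid
        · exact absurd h hl1
      have e2' : a2 - a3 = 0 := by
        rcases mul_eq_zero.mp e2 with h | h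
        · rcases mul_eq_zero.mp h with h' | h'
          · exact h'
          · exact absurd h' hmid
        · exact absurd h hl2
      exact ⟨by linarith, by linarith⟩
    · rintro (⟨ha, hb⟩ | hsum)
      · constructor
        · rw [show a1 - a2 = 0 by linarith]; ring
        · rw [show a2 - a3 = 0 by linarith]; ring
      · constructor
        · rw [show m - a1 - a2 - a3 = 0 by linarith]; ring
        · rw [show m - a1 - a2 - a3 = 0 by linarith]; ring
  exact ⟨key.trans key2.symm, key⟩
end
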